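/- arXiv:math/0109195 — 2 statements merged into one kernel-verified Lean document; each statement's English description precedes it below -/
import Mathlib

section
/- In the layout where v_i is placed at (i, i+1) and the subdivision vertex of the edge v_i v_j (i < j) is placed at (j+1, i), any two 'first-layer' segments — segments from (i, i+1) to (j+1, i) for i < j — that do not share an endpoint do not cross. (Two such segments with the same i share the endpoint v_i; show that segments with distinct values of i are disjoint except possibly at shared endpoints, because the segment from (i,i+1) to (j+1,i) lies within the horizontal strip i ≤ y ≤ i+1.) -/
lemma open_strip (m : ℝ) (x : ℝ) (p : ℝ × ℝ)
    (hp : p ∈ openSegment ℝ ((m, m + 1) : ℝ × ℝ) ((x, m) : ℝ × ℝ)) :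
    m < p.2 ∧ p.2 < m + 1 := by
  obtain ⟨a, b, ha, hb, hab, rfl⟩ := hp
  have h2 : (a • ((m : ℝ), m + 1) + b • ((x : ℝ), m)).2 = m + a := by
    simp [Prod.snd]; linear_combination m * hab
  rw [h2]
  constructor <;> nlinarith

/-- First-layer segments: for `i < j < k`, the segment `S_{i,j}` from `(i, i+1)` to
`(j+1, i)` lies in the horizontal strip `i ≤ y ≤ i+1`, and for `i ≠ i'` the open
segments `S_{i,j}` and `S_{i',j'}` are disjoint. -/
theorem first_layer_segments (k i j i' j' : ℕ)
    (hij : i < j) (hjk : j < k) (hij' : i' < j') (hj'k : j' < k) :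
    segment ℝ (((i : ℝ), (i : ℝ) + 1) : ℝ × ℝ) (((j : ℝ) + 1, (i : ℝ)) : ℝ × ℝ) ⊆
      {p : ℝ × ℝ | (i : ℝ) ≤ p.2 ∧ p.2 ≤ (i : ℝ) + 1} ∧
    (i ≠ i' →
      Disjoint
        (openSegment ℝ (((i : ℝ), (i : ℝ) + 1) : ℝ × ℝ) (((j : ℝ) + 1, (i : ℝ)) : ℝ × ℝ))
        (openSegment ℝ (((i' : ℝ), (i' : ℝ) + 1) : ℝ × ℝ)
          (((j' : ℝ) + 1, (i' : ℝ)) : ℝ × ℝ))) := by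
  constructor
  · rintro p ⟨a, b, ha, hb, hab, rfl⟩
    have h2 : (a • (((i : ℝ)), (i : ℝ) + 1) + b • (((j : ℝ) + 1, (i : ℝ)))).2 = i + a := by
      simp [Prod.snd]; linear_combination (i:ℝ) * hab
    constructor <;> simp only [Set.mem_setOf_eq, h2] <;> nlinarith
  · intro hne
    rw [Set.disjoint_left]
    intro p hp hp'
    have h1 := open_strip (i : ℝ) ((j : ℝ) + 1) p hp
    have h2 := open_strip (i' : ℝ) ((j' : ℝ) + 1) p hp'
    rcases lt_or_gt_of_ne hne with h | h
    · have : (i : ℝ) + 1 ≤ i' := by exact_mod_cast h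
      linarith [h1.2, h2.1]
    · have : (i' : ℝ) + 1 ≤ i := by exact_mod_cast h
      linarith [h1.1, h2.2]
end

section
/- For every positive integer t there exists k such that the graph G_k (full subdivision of K_k) has no book embedding in t−1 pages. -/
/-- Vertices of the full subdivision of `K_k`: singleton and doubleton subsets of `Fin k`. -/
def GVert (k : ℕ) : Type := {s : Finset (Fin k) // s.card = 1 ∨ s.card = 2}

/-- The full subdivision `G_k` of the complete graph `K_k`: vertices are the singleton and
doubleton subsets of `Fin k`, with an edge whenever one is strictly contained in the other. -/
def Gk (k : ℕ) : SimpleGraph (GVert k) where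
  Adj a b := a.1 ⊂ b.1 ∨ b.1 ⊂ a.1
  symm := ⟨fun _ _ h => h.symm⟩
  loopless := ⟨fun _ h => by rcases h with h | h <;> exact (ssubset_irrefl _) h⟩

/-- A book embedding of a graph `G` in `m` pages: a linear order of the vertices (given by
an injective map to `ℝ`) together with an assignment of each edge to one of `m` pages such
that no two edges on the same page interleave. -/
structure BookEmbedding {V : Type*} (G : SimpleGraph V) (m : ℕ) where
  ord : V → ℝ
  ord_inj : Function.Injective ord
  page : ∀ {u v : V}, G.Adj u v → Fin m
  page_symm : ∀ {u v : V} (h : G.Adj u v), page h.symm = page h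
  noCross : ∀ {a b c d : V} (h : G.Adj a b) (h' : G.Adj c d),
      page h = page h' →
      ¬ (ord a < ord c ∧ ord c < ord b ∧ ord b < ord d)

/-!
List the branch vertices of `G_k` in spine order and colour each pair `i < j` by the pages of
the two halves of the path `i — {i, j} — j` and by where its subdivision vertex lies: left of
`i`, between `i` and `j`, or right of `j`. By Ramsey's theorem for pairs, once `k` is large some
five branch vertices span ten paths of one colour. No such homogeneous configuration exists:
for each of the three positions a handful of forced comparisons ends in two arcs of one page
that interleave. (The position refines the paper's colouring; it turns the appeal to the
nonplanarity of the subdivided `K₅` into this short case analysis.)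
-/

open Finset

theorem exists_strictMono_color_eq_left {α C : Type*} [LinearOrder α] [Fintype C] [Nonempty C]
    (f : α → α → C) (m : ℕ) (S : Finset α) (hS : (Fintype.card C + 1) ^ m ≤ #S) :
    ∃ (a : Fin m → α) (g : Fin m → C), StrictMono a ∧ (∀ i, a i ∈ S) ∧
      ∀ i j, i < j → f (a i) (a j) = g i := by
  classical
  induction m generalizing S with
  | zero => exact ⟨finZeroElim, finZeroElim, fun i => i.elim0, finZeroElim, finZeroElim⟩
  | succ m ih =>
    have hne : S.Nonempty := card_pos.mp (lt_of_lt_of_le (by positivity) hS)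
    set x := S.min' hne
    have hcard : #(univ : Finset C) * (Fintype.card C + 1) ^ m ≤ #(S.erase x) := by
      have : 0 < (Fintype.card C + 1) ^ m := by positivity
      rw [pow_succ, mul_add_one, mul_comm] at hS
      rw [card_univ, card_erase_of_mem (S.min'_mem hne)]
      omega
    obtain ⟨c, -, hc⟩ := Finset.exists_le_card_fiber_of_mul_le_card_of_maps_to (f := f x)
      (fun _ _ => mem_univ _) univ_nonempty hcard
    obtain ⟨a, g, ha, haS, hag⟩ := ih _ hc
    have hmem : ∀ i, a i ∈ S.erase x ∧ f x (a i) = c := fun i => mem_filter.mp (haS i)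
    refine ⟨Fin.cons x a, Fin.cons c g,
      Fin.strictMono_cons.mpr ⟨fun i => S.min'_lt_of_mem_erase_min' hne (hmem i).1, ha⟩, ?_, ?_⟩
    · intro i
      cases i using Fin.cases with
      | zero => exact S.min'_mem hne
      | succ i => exact mem_of_mem_erase (hmem i).1
    · intro i j hij
      cases j using Fin.cases with
      | zero => exact absurd hij (Fin.not_lt_zero i)
      | succ j =>
        cases i using Fin.cases with
        | zero => exact (hmem j).2
        | succ i => exact hag i j (Fin.succ_lt_succ_iff.mp hij)

theorem exists_strictMono_monochromatic (C : Type*) [Fintype C] [Nonempty C] (r : ℕ) :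
    ∃ N, ∀ f : Fin N → Fin N → C, ∃ (z : Fin r → Fin N) (d : C),
      StrictMono z ∧ ∀ i j, i < j → f (z i) (z j) = d := by
  classical
  refine ⟨(Fintype.card C + 1) ^ (Fintype.card C * r), fun f => ?_⟩
  obtain ⟨a, g, ha, -, hag⟩ :=
    exists_strictMono_color_eq_left f (Fintype.card C * r) univ (by simp)
  obtain ⟨d, hd⟩ := Fintype.exists_le_card_fiber_of_mul_le_card g (n := r) (by simp)
  set F := ({i | g i = d} : Finset _)
  set e := F.orderEmbOfFin rfl
  have he : StrictMono (e ∘ Fin.castLE hd) := e.strictMono.comp (Fin.strictMono_castLE hd)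
  refine ⟨a ∘ e ∘ Fin.castLE hd, d, ha.comp he, fun i j hij => ?_⟩
  exact (hag _ _ (he hij)).trans (mem_filter.mp (F.orderEmbOfFin_mem rfl (Fin.castLE hd i))).2

theorem Tuple.strictMono_comp_sort {α : Type*} [LinearOrder α] {n : ℕ} {f : Fin n → α}
    (hf : Function.Injective f) : StrictMono (f ∘ Tuple.sort f) :=
  (Tuple.monotone_sort f).strictMono_of_injective (hf.comp (Tuple.sort f).injective)

namespace GVert

variable {k : ℕ}

instance : DecidableEq (GVert k) :=
  inferInstanceAs (DecidableEq {s : Finset (Fin k) // s.card = 1 ∨ s.card = 2})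

def sing (i : Fin k) : GVert k := ⟨{i}, .inl (card_singleton i)⟩

def duo (i j : Fin k) : GVert k := ⟨{i, j}, card_pair_eq_one_or_two⟩

theorem sing_injective : Function.Injective (sing (k := k)) :=
  fun _ _ h => singleton_injective (congrArg Subtype.val h)

theorem sing_ne_duo {i j : Fin k} (h : i ≠ j) (l : Fin k) : sing l ≠ duo i j := fun he => by
  have := congrArg (fun s : GVert k => #s.1) he
  simp [sing, duo, card_pair h] at this

end GVert

open GVert

namespace Gk

variable {k n : ℕ}

theorem adj_sing_duo {i j : Fin k} (h : i ≠ j) : (Gk k).Adj (sing i) (duo i j) :=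
  .inl (Finset.ssubset_iff_subset_ne.mpr ⟨by simp [sing, duo], fun he => by
    simpa [sing, duo, card_pair h] using congrArg card he⟩)

theorem adj_duo_sing {i j : Fin k} (h : i ≠ j) : (Gk k).Adj (duo i j) (sing j) := by
  have : duo i j = duo j i := Subtype.ext (pair_comm i j)
  exact this ▸ (adj_sing_duo h.symm).symm

def map (f : Fin k ↪ Fin n) : Gk k ↪g Gk n where
  toFun s := ⟨s.1.map f, by rw [card_map]; exact s.2⟩
  inj' _ _ h := Subtype.ext (map_injective f (congrArg Subtype.val h))
  map_rel_iff' := or_congr map_ssubset_map map_ssubset_map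

@[simp] theorem map_sing (f : Fin k ↪ Fin n) (i : Fin k) : map f (sing i) = sing (f i) :=
  Subtype.ext (map_singleton f i)

@[simp] theorem map_duo (f : Fin k ↪ Fin n) (i j : Fin k) : map f (duo i j) = duo (f i) (f j) :=
  Subtype.ext (show ({i, j} : Finset _).map f = {f i, f j} by simp)

end Gk

namespace BookEmbedding

variable {V W : Type*} {G : SimpleGraph V} {H : SimpleGraph W} {m : ℕ}

def comap (E : BookEmbedding H m) (f : G ↪g H) : BookEmbedding G m where
  ord := E.ord ∘ f
  ord_inj := E.ord_inj.comp f.injective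
  page h := E.page (f.map_adj_iff.mpr h)
  page_symm _ := E.page_symm _
  noCross _ _ := E.noCross _ _

open Classical in
noncomputable def pageOf (E : BookEmbedding G m) (u v : V) : Option (Fin m) :=
  if h : G.Adj u v then some (E.page h) else none

variable (E : BookEmbedding G m)

theorem pageOf_of_adj {u v : V} (h : G.Adj u v) : E.pageOf u v = some (E.page h) := by
  simp [pageOf, h]

theorem pageOf_comm (u v : V) : E.pageOf u v = E.pageOf v u := by
  by_cases h : G.Adj u v
  · rw [E.pageOf_of_adj h, E.pageOf_of_adj h.symm, E.page_symm]
  · have h' : ¬G.Adj v u := fun h' => h h'.symm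
    simp [pageOf, h, h']

theorem not_interleave {a b c d : V} {p : Fin m} (hab : E.pageOf a b = some p)
    (hcd : E.pageOf c d = some p) :
    ¬(E.ord a < E.ord c ∧ E.ord c < E.ord b ∧ E.ord b < E.ord d) := by
  unfold pageOf at hab hcd
  split_ifs at hab hcd with h h'
  exact E.noCross h h' (Option.some_injective _ (hab.trans hcd.symm))

@[simp] theorem comap_ord (E : BookEmbedding H m) (f : G ↪g H) (v : V) :
    (E.comap f).ord v = E.ord (f v) :=
  rfl

@[simp] theorem pageOf_comap (E : BookEmbedding H m) (f : G ↪g H) (u v : V) :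
    (E.comap f).pageOf u v = E.pageOf (f u) (f v) := by
  by_cases h : G.Adj u v
  · rw [pageOf_of_adj _ h, pageOf_of_adj _ (f.map_adj_iff.mpr h)]; rfl
  · simp [pageOf, h]

theorem ord_lt_or_gt {u v : V} (h : u ≠ v) : E.ord u < E.ord v ∨ E.ord v < E.ord u :=
  lt_or_gt_of_ne (E.ord_inj.ne h)

section FiveVertices

variable {m : ℕ} (E : BookEmbedding (Gk 5) m) {p q : Fin m}
  (hx : StrictMono fun i => E.ord (sing i))
  (hT : ∀ i j : Fin 5, i < j → E.pageOf (sing i) (duo i j) = some p)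
  (hB : ∀ i j : Fin 5, i < j → E.pageOf (duo i j) (sing j) = some q)
include hx hT hB

theorem false_of_forall_duo_lt_sing_left
    (hv : ∀ i j : Fin 5, i < j → E.ord (duo i j) < E.ord (sing i)) : False := by
  have h₁ : E.ord (duo 2 3) < E.ord (duo 1 2) := (E.ord_lt_or_gt (by decide)).resolve_right
    fun h => E.not_interleave (hB 1 2 (by decide)) (hB 2 3 (by decide))
      ⟨h, hv 2 3 (by decide), hx (by decide)⟩
  have h₂ : E.ord (duo 1 4) < E.ord (duo 2 3) := (E.ord_lt_or_gt (by decide)).resolve_right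
    fun h => E.not_interleave (hB 2 3 (by decide)) (hB 1 4 (by decide))
      ⟨h, (hv 1 4 (by decide)).trans (hx (by decide)), hx (by decide)⟩
  exact E.not_interleave ((E.pageOf_comm _ _).trans (hT 1 4 (by decide)))
    ((E.pageOf_comm _ _).trans (hT 2 3 (by decide)))
    ⟨h₂, h₁.trans (hv 1 2 (by decide)), hx (by decide)⟩

theorem false_of_forall_sing_right_lt_duo
    (hv : ∀ i j : Fin 5, i < j → E.ord (sing j) < E.ord (duo i j)) : False := by
  have h₁ : E.ord (duo 3 4) < E.ord (duo 2 3) := (E.ord_lt_or_gt (by decide)).resolve_right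
    fun h => E.not_interleave (hT 2 3 (by decide)) (hT 3 4 (by decide))
      ⟨hx (by decide), hv 2 3 (by decide), h⟩
  have h₂ : E.ord (duo 2 3) < E.ord (duo 1 4) := (E.ord_lt_or_gt (by decide)).resolve_right
    fun h => E.not_interleave (hT 1 4 (by decide)) (hT 2 3 (by decide))
      ⟨hx (by decide), (hx (by decide)).trans (hv 1 4 (by decide)), h⟩
  exact E.not_interleave ((E.pageOf_comm _ _).trans (hB 2 3 (by decide)))
    ((E.pageOf_comm _ _).trans (hB 1 4 (by decide)))
    ⟨hx (by decide), (hv 3 4 (by decide)).trans h₁, h₂⟩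

theorem false_of_forall_duo_between
    (hlo : ∀ i j : Fin 5, i < j → E.ord (sing i) < E.ord (duo i j))
    (hhi : ∀ i j : Fin 5, i < j → E.ord (duo i j) < E.ord (sing j)) : False := by
  rcases E.ord_lt_or_gt (by decide : duo 1 3 ≠ sing 2) with h13 | h13
  · have h24 : E.ord (sing 3) < E.ord (duo 2 4) := (E.ord_lt_or_gt (by decide)).resolve_left
      fun h => E.not_interleave (hB 1 3 (by decide)) (hB 2 4 (by decide))
        ⟨h13.trans (hlo 2 4 (by decide)), h, hx (by decide)⟩
    rcases E.ord_lt_or_gt (by decide : duo 1 4 ≠ sing 3) with h14 | h14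
    · have h03 : E.ord (sing 1) < E.ord (duo 0 3) := (E.ord_lt_or_gt (by decide)).resolve_left
        fun h => E.not_interleave (hB 0 3 (by decide)) (hB 1 4 (by decide))
          ⟨h.trans (hlo 1 4 (by decide)), h14, hx (by decide)⟩
      have h03' : E.ord (duo 0 3) < E.ord (sing 2) := (E.ord_lt_or_gt (by decide)).resolve_right
        fun h => E.not_interleave (hT 0 3 (by decide)) (hT 2 4 (by decide))
          ⟨hx (by decide), h, (hhi 0 3 (by decide)).trans h24⟩
      have h12 : E.ord (duo 1 2) < E.ord (duo 0 3) := (E.ord_lt_or_gt (by decide)).resolve_right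
        fun h => E.not_interleave (hT 0 3 (by decide)) (hT 1 2 (by decide))
          ⟨hx (by decide), h03, h⟩
      exact E.not_interleave (hB 1 2 (by decide)) (hB 0 3 (by decide))
        ⟨h12, h03', hx (by decide)⟩
    · have h02 : E.ord (duo 0 2) < E.ord (sing 1) := (E.ord_lt_or_gt (by decide)).resolve_right
        fun h => E.not_interleave (hT 0 2 (by decide)) (hT 1 4 (by decide))
          ⟨hx (by decide), h, (hhi 0 2 (by decide)).trans ((hx (by decide)).trans h14)⟩
      exact E.not_interleave (hB 0 2 (by decide)) (hB 1 3 (by decide))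
        ⟨h02.trans (hlo 1 3 (by decide)), h13, hx (by decide)⟩
  · have h02 : E.ord (duo 0 2) < E.ord (sing 1) := (E.ord_lt_or_gt (by decide)).resolve_right
      fun h => E.not_interleave (hT 0 2 (by decide)) (hT 1 3 (by decide))
        ⟨hx (by decide), h, (hhi 0 2 (by decide)).trans h13⟩
    rcases E.ord_lt_or_gt (by decide : duo 0 3 ≠ sing 1) with h03 | h03
    · have h24 : E.ord (sing 3) < E.ord (duo 2 4) := (E.ord_lt_or_gt (by decide)).resolve_left
        fun h => E.not_interleave (hB 0 3 (by decide)) (hB 2 4 (by decide))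
          ⟨h03.trans ((hx (by decide)).trans (hlo 2 4 (by decide))), h, hx (by decide)⟩
      exact E.not_interleave (hT 1 3 (by decide)) (hT 2 4 (by decide))
        ⟨hx (by decide), h13, (hhi 1 3 (by decide)).trans h24⟩
    · have h14 : E.ord (duo 1 4) < E.ord (sing 3) := (E.ord_lt_or_gt (by decide)).resolve_right
        fun h => E.not_interleave (hT 0 3 (by decide)) (hT 1 4 (by decide))
          ⟨hx (by decide), h03, (hhi 0 3 (by decide)).trans h⟩
      have h14' : E.ord (sing 2) < E.ord (duo 1 4) := (E.ord_lt_or_gt (by decide)).resolve_left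
        fun h => E.not_interleave (hB 0 2 (by decide)) (hB 1 4 (by decide))
          ⟨h02.trans (hlo 1 4 (by decide)), h, hx (by decide)⟩
      have h23 : E.ord (duo 1 4) < E.ord (duo 2 3) := (E.ord_lt_or_gt (by decide)).resolve_right
        fun h => E.not_interleave (hB 2 3 (by decide)) (hB 1 4 (by decide))
          ⟨h, h14, hx (by decide)⟩
      exact E.not_interleave (hT 1 4 (by decide)) (hT 2 3 (by decide))
        ⟨hx (by decide), h14', h23⟩

end FiveVertices

end BookEmbedding

namespace BookEmbedding

variable {k m : ℕ}

noncomputable def pathType (E : BookEmbedding (Gk k) m) (i j : Fin k) :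
    Option (Fin m) × Option (Fin m) × Bool × Bool :=
  (E.pageOf (sing i) (duo i j), E.pageOf (duo i j) (sing j),
    decide (E.ord (duo i j) < E.ord (sing i)), decide (E.ord (duo i j) < E.ord (sing j)))

theorem pathType_comap {n : ℕ} (E : BookEmbedding (Gk n) m) (f : Fin k ↪ Fin n)
    (i j : Fin k) : (E.comap (Gk.map f)).pathType i j = E.pathType (f i) (f j) := by
  simp [pathType]

theorem exists_pathType_ne (E : BookEmbedding (Gk 5) m)
    (hx : StrictMono fun i => E.ord (sing i)) (d : Option (Fin m) × Option (Fin m) × Bool × Bool) :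
    ∃ i j, i < j ∧ E.pathType i j ≠ d := by
  by_contra! hd
  obtain ⟨pT, pB, b₁, b₂⟩ := d
  simp only [pathType, Prod.mk.injEq] at hd
  obtain ⟨p, rfl⟩ : ∃ p, pT = some p :=
    ⟨_, (hd 0 1 (by decide)).1.symm.trans (E.pageOf_of_adj (Gk.adj_sing_duo (by decide)))⟩
  obtain ⟨q, rfl⟩ : ∃ q, pB = some q :=
    ⟨_, (hd 0 1 (by decide)).2.1.symm.trans (E.pageOf_of_adj (Gk.adj_duo_sing (by decide)))⟩
  have hT i j h := (hd i j h).1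
  have hB i j h := (hd i j h).2.1
  have hne (i j l : Fin 5) (h : i < j) : E.ord (sing l) ≠ E.ord (duo i j) :=
    E.ord_inj.ne (sing_ne_duo h.ne l)
  cases b₁
  · have hlo i j h := (not_lt.mp (of_decide_eq_false (hd i j h).2.2.1)).lt_of_ne (hne i j i h)
    cases b₂
    · exact E.false_of_forall_sing_right_lt_duo hx hT hB fun i j h =>
        (not_lt.mp (of_decide_eq_false (hd i j h).2.2.2)).lt_of_ne (hne i j j h)
    · exact E.false_of_forall_duo_between hx hT hB hlo fun i j h =>
        of_decide_eq_true (hd i j h).2.2.2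
  · exact E.false_of_forall_duo_lt_sing_left hx hT hB fun i j h =>
      of_decide_eq_true (hd i j h).2.2.1

end BookEmbedding

theorem Gk_unbounded_book_thickness_general (t : ℕ) :
    ∃ k, ¬ Nonempty (BookEmbedding (Gk k) (t - 1)) := by
  obtain ⟨N, hN⟩ := exists_strictMono_monochromatic
    (Option (Fin (t - 1)) × Option (Fin (t - 1)) × Bool × Bool) 5
  refine ⟨N, fun ⟨E⟩ => ?_⟩
  set σ := Tuple.sort fun i => E.ord (sing i)
  have hσ : StrictMono fun i => E.ord (sing (σ i)) :=
    Tuple.strictMono_comp_sort (E.ord_inj.comp sing_injective)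
  obtain ⟨z, d, hz, hd⟩ := hN fun i j => E.pathType (σ i) (σ j)
  let y : Fin 5 ↪ Fin N := ⟨σ ∘ z, σ.injective.comp hz.injective⟩
  have hy : StrictMono fun i => E.ord (sing (y i)) := hσ.comp hz
  obtain ⟨i, j, hij, hne⟩ := (E.comap (Gk.map y)).exists_pathType_ne (by simpa using hy) d
  exact hne ((E.pathType_comap _ i j).trans (hd i j hij))

/-- For every positive integer `t` there is a `k` such that the full subdivision `G_k` of
`K_k` has no book embedding in `t - 1` pages. -/
theorem Gk_unbounded_book_thickness (t : ℕ) (ht : 0 < t) :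
    ∃ k, ¬ Nonempty (BookEmbedding (Gk k) (t - 1)) :=
  Gk_unbounded_book_thickness_general t
end
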